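/- Let F : ℝ^{r'} → ℝ^r be a surjective linear map mapping the lattice ℤ^{r'} into ℤ^r, and let σ ⊆ ℝ^r be an n-dimensional rational polyhedron. Then F⁻¹(σ) is a rational polyhedron of dimension n + r' − r, and its direction space is the preimage under F of the direction space of σ; in particular F(relint(F⁻¹(σ))) = relint(σ). -/

import Mathlib

/-!
Integrality of `F` means that `F` is multiplication by an integer matrix `N`, so each defining
inequality `⟨l, x⟩ ≤ c` of `σ` pulls back to the integral inequality `⟨lᵀN, y⟩ ≤ c`.
Since `F` is onto and `σ ≠ ∅`, `F⁻¹(σ)` contains a translate of `ker F`; hence its direction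
space is the full preimage of that of `σ`, of dimension `n + dim ker F = n + r' - r`.
Consequently `aff F⁻¹(σ) = F⁻¹(aff σ)`, and `F` restricts to a continuous open surjection
`aff F⁻¹(σ) → aff σ`; such a map carries the interior of a preimage onto the interior.
-/

/-- A rational (integral `ℝ`-affine) polyhedron in `ℝ^r`: a finite
intersection of half-spaces with integral normals. -/
def IsRatPolyhedron (r : ℕ) (s : Set (Fin r → ℝ)) : Prop :=
  ∃ (m : ℕ) (l : Fin m → Fin r → ℤ) (c : Fin m → ℝ),
    s = ⋂ i, {x | ∑ k, (l i k : ℝ) * x k ≤ c i}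

open Set Function Module Matrix

theorem IsRatPolyhedron.preimage_mulVec {r r' : ℕ} {σ : Set (Fin r → ℝ)}
    (hσ : IsRatPolyhedron r σ) (N : Matrix (Fin r) (Fin r') ℤ) :
    IsRatPolyhedron r' ((N.map ((↑) : ℤ → ℝ) *ᵥ ·) ⁻¹' σ) := by
  obtain ⟨m, l, c, rfl⟩ := hσ
  refine ⟨m, fun i => l i ᵥ* N, c, ?_⟩
  simp only [preimage_iInter]
  congr! 2 with i
  ext y
  change (Int.cast ∘ l i) ⬝ᵥ (N.map _ *ᵥ y) ≤ c i ↔ (Int.cast ∘ (l i ᵥ* N)) ⬝ᵥ y ≤ c i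
  rw [dotProduct_mulVec]
  congr! 2
  exact funext fun j => ((Int.castRingHom ℝ).map_vecMul N (l i) j).symm

theorem exists_int_matrix_eq_mulVec {r r' : ℕ} {F : (Fin r' → ℝ) →ₗ[ℝ] (Fin r → ℝ)}
    (hF : ∀ v : Fin r' → ℤ, ∃ w : Fin r → ℤ, F (fun i => (v i : ℝ)) = fun j => (w j : ℝ)) :
    ∃ N : Matrix (Fin r) (Fin r') ℤ, ⇑F = (N.map ((↑) : ℤ → ℝ) *ᵥ ·) := by
  choose w hw using fun j => hF (Pi.single j 1)
  refine ⟨Matrix.of fun i j => w j i, funext fun y => ?_⟩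
  rw [← LinearMap.toMatrix'_mulVec]
  congr 1
  ext i j : 2
  rw [LinearMap.toMatrix'_apply, map_apply, of_apply, ← congrFun (hw j) i]
  exact congrFun (congrArg F (funext fun i' => by simp [Pi.single_apply])) i

theorem image_val_interior_preimage_restrictPreimage {X Y : Type*} [TopologicalSpace X]
    [TopologicalSpace Y] {f : X → Y} (hc : Continuous f) (ho : IsOpenMap f) (hs : Surjective f)
    (t s : Set Y) :
    f '' (Subtype.val '' interior (Subtype.val ⁻¹' (f ⁻¹' s) : Set (f ⁻¹' t))) =
      Subtype.val '' interior (Subtype.val ⁻¹' s : Set t) := by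
  have hcomm : f ∘ Subtype.val = Subtype.val ∘ t.restrictPreimage f := rfl
  rw [← image_comp, hcomm, image_comp]
  congr 1
  change _ '' interior (t.restrictPreimage f ⁻¹' (Subtype.val ⁻¹' s)) = _
  rw [← (ho.restrictPreimage t).preimage_interior_eq_interior_preimage hc.restrictPreimage]
  exact image_preimage_eq _ (t.restrictPreimage_surjective hs)

section

variable {k V W : Type*} [Ring k] [AddCommGroup V] [Module k V] [AddCommGroup W] [Module k W]

theorem ker_le_vectorSpan_preimage (f : V →ₗ[k] W) {s : Set W} {x : V} (hx : f x ∈ s) :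
    LinearMap.ker f ≤ vectorSpan k (f ⁻¹' s) := fun v hv => by
  simpa using vsub_mem_vectorSpan k (s := f ⁻¹' s) (p₁ := v + x) (p₂ := x)
    (by simpa [LinearMap.mem_ker.mp hv]) hx

theorem vectorSpan_preimage_of_surjective {f : V →ₗ[k] W} (hf : Surjective f) {s : Set W}
    (hs : s.Nonempty) : vectorSpan k (f ⁻¹' s) = (vectorSpan k s).comap f := by
  obtain ⟨x, hx⟩ := hf.nonempty_preimage.2 hs
  have hmap := f.toAffineMap.map_vectorSpan (s := f ⁻¹' s)
  rw [LinearMap.coe_toAffineMap, image_preimage_eq s hf] at hmap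
  rw [← hmap, LinearMap.toAffineMap_linear, Submodule.comap_map_eq,
    sup_eq_left.2 (ker_le_vectorSpan_preimage f (s := s) hx)]

theorem coe_affineSpan_preimage_of_surjective {f : V →ₗ[k] W} (hf : Surjective f) (s : Set W) :
    (affineSpan k (f ⁻¹' s) : Set V) = f ⁻¹' affineSpan k s := by
  rcases s.eq_empty_or_nonempty with rfl | hs
  · simp
  obtain ⟨x, hx⟩ := hf.nonempty_preimage.2 hs
  ext y
  rw [SetLike.mem_coe, ← AffineSubspace.vsub_right_mem_direction_iff_mem (mem_affineSpan k hx),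
    direction_affineSpan, vectorSpan_preimage_of_surjective hf hs, mem_preimage, SetLike.mem_coe,
    ← AffineSubspace.vsub_right_mem_direction_iff_mem (mem_affineSpan k (mem_preimage.1 hx)),
    direction_affineSpan, Submodule.mem_comap, vsub_eq_sub, vsub_eq_sub, map_sub]

theorem finrank_comap_of_surjective {K : Type*} [DivisionRing K] [Module K V] [Module K W]
    [FiniteDimensional K V] {f : V →ₗ[K] W} (hf : Surjective f) (p : Submodule K W) :
    finrank K (p.comap f) = finrank K p + finrank K (LinearMap.ker f) := by
  set g := f.domRestrict (p.comap f)
  have hrange : LinearMap.range g = p := by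
    rw [LinearMap.range_domRestrict, Submodule.map_comap_eq_of_surjective hf]
  have hker : LinearMap.ker g ≃ₗ[K] LinearMap.ker f := by
    rw [LinearMap.ker_domRestrict]
    exact Submodule.comapSubtypeEquivOfLe fun v hv => by simp [LinearMap.mem_ker.mp hv]
  rw [← g.finrank_range_add_finrank_ker, hrange, hker.finrank_eq]

theorem image_intrinsicInterior_preimage [TopologicalSpace V] [TopologicalSpace W]
    {f : V →ₗ[k] W} (hc : Continuous f) (ho : IsOpenMap f) (hs : Surjective f) (s : Set W) :
    f '' intrinsicInterior k (f ⁻¹' s) = intrinsicInterior k s := by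
  have h := image_val_interior_preimage_restrictPreimage hc ho hs (affineSpan k s) s
  rw [← coe_affineSpan_preimage_of_surjective hs] at h
  exact h

end

/-- **Preimage of a rational polyhedron under a surjective integral linear
map.**
Let `F : ℝ^{r'} → ℝ^r` be a surjective linear map sending `ℤ^{r'}` into
`ℤ^r`, and let `σ ⊆ ℝ^r` be a nonempty rational polyhedron of dimension `n`.
Then `F⁻¹(σ)` is a rational polyhedron of dimension `n + r' − r`, its
direction space is the preimage under `F` of the direction space of `σ`, and
`F` maps the relative interior of `F⁻¹(σ)` onto the relative interior of
`σ`. -/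
theorem preimage_rational_polyhedron
    (r' r n : ℕ)
    (F : (Fin r' → ℝ) →ₗ[ℝ] (Fin r → ℝ))
    (hsurj : Function.Surjective F)
    (hint : ∀ v : Fin r' → ℤ, ∃ w : Fin r → ℤ,
        F (fun i => (v i : ℝ)) = fun j => (w j : ℝ))
    (σ : Set (Fin r → ℝ)) (hσ : IsRatPolyhedron r σ) (hne : σ.Nonempty)
    (hdim : Module.finrank ℝ (vectorSpan ℝ σ) = n) :
    IsRatPolyhedron r' (F ⁻¹' σ) ∧
    Module.finrank ℝ (vectorSpan ℝ (F ⁻¹' σ)) = n + r' - r ∧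
    vectorSpan ℝ (F ⁻¹' σ) = (vectorSpan ℝ σ).comap F ∧
    F '' intrinsicInterior ℝ (F ⁻¹' σ) = intrinsicInterior ℝ σ := by
  have hdirection := vectorSpan_preimage_of_surjective hsurj hne
  have hrank : r + finrank ℝ (LinearMap.ker F) = r' := by
    have h := F.finrank_range_add_finrank_ker
    rwa [LinearMap.range_eq_top.2 hsurj, finrank_top, finrank_fin_fun, finrank_fin_fun] at h
  refine ⟨?_, ?_, hdirection, image_intrinsicInterior_preimage F.continuous_of_finiteDimensional
    (F.isOpenMap_of_finiteDimensional hsurj) hsurj σ⟩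
  · obtain ⟨N, hN⟩ := exists_int_matrix_eq_mulVec hint
    rw [hN]
    exact hσ.preimage_mulVec N
  · rw [hdirection, finrank_comap_of_surjective hsurj, hdim]
    omega
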